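/- Let p be a prime, let M be a real number with 0 < M ≤ 8, and let n, m be positive integers and N a positive integer such that p^n = p^m · N and N ≤ (4/M)·p^m/(p^m − 1)^2. Then p^n ≤ (4p/((p-1)^2)) · (2 + M + 2·sqrt(1+M))/M^2. -/
import Mathlib

theorem stmt_19 (p : ℕ) (hp : p.Prime) (M : ℝ) (hM : 0 < M) (hM8 : M ≤ 8)
    (n m N : ℕ) (hn : 0 < n) (hm : 0 < m) (hN : 0 < N)
    (hfac : p ^ n = p ^ m * N)
    (hNle : (N : ℝ) ≤ (4 / M) * (p : ℝ) ^ m / ((p : ℝ) ^ m - 1) ^ 2) :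
    (p : ℝ) ^ n ≤ (4 * p / ((p : ℝ) - 1) ^ 2) * (2 + M + 2 * Real.sqrt (1 + M)) / M ^ 2 := by
  have hp2 : (2:ℝ) ≤ (p:ℝ) := by exact_mod_cast hp.two_le
  set q : ℝ := (p:ℝ) ^ m with hqdef
  have hpq : (p:ℝ) ≤ q := by
    calc (p:ℝ) = (p:ℝ)^1 := (pow_one _).symm
    _ ≤ q := pow_le_pow_right₀ (by linarith) hm
  have hq2 : (2:ℝ) ≤ q := le_trans hp2 hpq
  set s := Real.sqrt (1 + M) with hsdef
  have hs0 : 0 ≤ s := Real.sqrt_nonneg _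
  have hs2 : s^2 = 1 + M := Real.sq_sqrt (by linarith)
  have hN1 : (1:ℝ) ≤ (N:ℝ) := by exact_mod_cast hN
  have hq1 : (0:ℝ) < q - 1 := by linarith
  have hp1 : (0:ℝ) < (p:ℝ) - 1 := by linarith
  have key : M * (q-1)^2 ≤ 4 * q := by
    have h1 := le_trans hN1 hNle
    rw [div_mul_eq_mul_div, div_div, le_div_iff₀ (mul_pos hM (pow_pos hq1 2))] at h1
    linarith
  have h2 : (M*q - (M+2))^2 ≤ (2*s)^2 := by
    nlinarith [mul_le_mul_of_nonneg_left key hM.le, hs2]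
  have h3 : M*q - (M+2) ≤ 2*s := by nlinarith [h2, hs0]
  have hqφ : q ≤ (2+M+2*s)/M := by
    rw [le_div_iff₀ hM]; nlinarith [h3]
  have hmono : q*((p:ℝ)-1)^2 ≤ (p:ℝ)*(q-1)^2 := by nlinarith [mul_nonneg (sub_nonneg.2 hpq) (show (0:ℝ) ≤ (p:ℝ)*q - 1 by nlinarith)]
  have hB : 4/M*q/(q-1)^2 ≤ 4/M*(p:ℝ)/((p:ℝ)-1)^2 := by
    rw [div_le_div_iff₀ (pow_pos hq1 2) (pow_pos hp1 2)]
    have h4 : (0:ℝ) ≤ 4/M := by positivity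
    calc 4/M*q*((p:ℝ)-1)^2 = 4/M*(q*((p:ℝ)-1)^2) := by ring
    _ ≤ 4/M*((p:ℝ)*(q-1)^2) := by exact mul_le_mul_of_nonneg_left hmono h4
    _ = 4/M*(p:ℝ)*(q-1)^2 := by ring
  have hBnn : (0:ℝ) ≤ 4/M*q/(q-1)^2 := le_trans (by linarith) hNle
  have hfacR : (p:ℝ)^n = q * (N:ℝ) := by rw [hqdef]; exact_mod_cast hfac
  calc (p:ℝ)^n = q * (N:ℝ) := hfacR
    _ ≤ q * (4/M*q/(q-1)^2) := mul_le_mul_of_nonneg_left hNle (by linarith)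
    _ ≤ ((2+M+2*s)/M) * (4/M*(p:ℝ)/((p:ℝ)-1)^2) := by
        apply mul_le_mul hqφ hB hBnn (by positivity)
    _ = (4 * p / ((p:ℝ) - 1) ^ 2) * (2 + M + 2 * s) / M ^ 2 := by
        field_simp
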